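/- For j = 0, 1 let u_j and v_j be nontrivial solutions of the same equation τ_{φ_j} u = 0 on I. Then for every c < d in I, |#_{(c,d)}(u₀, u₁) − #_{(c,d)}(v₀, v₁)| ≤ 4. -/

import Mathlib

open MeasureTheory Real Set

/-- The real matrix representing `(1/i)·σ₂`. -/
noncomputable def Jmat : Matrix (Fin 2) (Fin 2) ℝ := !![0, -1; 1, 0]

/-- `u` is locally absolutely continuous on `I` with a.e. derivative `u'`. -/
def IsACDeriv (I : Set ℝ) (u u' : ℝ → Fin 2 → ℝ) : Prop :=
  ContinuousOn u I ∧
  ∀ c ∈ I, ∀ x ∈ I, ∀ i : Fin 2,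
    IntervalIntegrable (fun t => u' t i) volume c x ∧
    u x i = u c i + ∫ t in c..x, u' t i

/-- `u` is a solution of the Dirac equation `τ_φ u = λ u` on `I`. -/
def IsDiracSolution (I : Set ℝ) (φ : ℝ → Matrix (Fin 2) (Fin 2) ℝ) (lam : ℝ)
    (u : ℝ → Fin 2 → ℝ) : Prop :=
  ∃ u' : ℝ → Fin 2 → ℝ, IsACDeriv I u u' ∧
    ∀ᵐ x ∂volume, x ∈ I → Jmat.mulVec (u' x) + (φ x).mulVec (u x) = lam • u x

/-- `θ` is a Prüfer angle for the nowhere vanishing continuous function `u` on `I`. -/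
def IsPruefer (I : Set ℝ) (u : ℝ → Fin 2 → ℝ) (θ : ℝ → ℝ) : Prop :=
  ContinuousOn θ I ∧
  ∀ x ∈ I, ∃ ρ : ℝ, 0 < ρ ∧ u x 0 = ρ * Real.sin (θ x) ∧ u x 1 = ρ * Real.cos (θ x)

/-- The weighted number of sign flips `#_{(c,d)}(u,v)` computed from Prüfer angles. -/
noncomputable def numFlips (θu θv : ℝ → ℝ) (c d : ℝ) : ℤ :=
  ⌈(θv d - θu d) / Real.pi⌉ - ⌊(θv c - θu c) / Real.pi⌋ - 1

/-!
Two solutions `u, v` of the same Dirac equation have a constant Wronskian `u 0 * v 1 - u 1 * v 0`: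
it is absolutely continuous, and the symmetry of `φ` makes its a.e. derivative vanish. In Prüfer
coordinates it equals `ρ_u ρ_v sin (θ_u - θ_v)`, so `sin (θ_u - θ_v)` vanishes either everywhere or
nowhere, and either way `θ_u - θ_v` varies by less than `π` over `[c, d]`. Applied to `(u₀, v₀)`
and `(u₁, v₁)`, the increments of `θ_{u₁} - θ_{u₀}` and `θ_{v₁} - θ_{v₀}` differ by less than
`2π`, and the ceiling and floor in `numFlips` add less than `2` more.
-/

open Filter Topology

theorem AbsolutelyContinuousOnInterval.congr {X : Type*} [PseudoMetricSpace X] {f g : ℝ → X}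
    {a b : ℝ} (hf : AbsolutelyContinuousOnInterval f a b) (hfg : EqOn f g (uIcc a b)) :
    AbsolutelyContinuousOnInterval g a b := by
  refine hf.congr' (eventually_inf_principal.2 (Eventually.of_forall fun E hE => ?_))
  refine Finset.sum_congr rfl fun i hi => ?_
  rw [hfg (hE.1 i hi).1, hfg (hE.1 i hi).2]

namespace IsACDeriv

variable {I : Set ℝ} {u u' : ℝ → Fin 2 → ℝ} {c d : ℝ}

theorem absolutelyContinuousOnInterval (h : IsACDeriv I u u') (hI : uIcc c d ⊆ I) (i : Fin 2) :
    AbsolutelyContinuousOnInterval (fun x => u x i) c d := by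
  have hc := hI left_mem_uIcc
  have hprim := (h.2 c hc d (hI right_mem_uIcc) i).1.absolutelyContinuousOnInterval_intervalIntegral
    left_mem_uIcc
  exact ((LipschitzWith.const (u c i)).lipschitzOnWith.absolutelyContinuousOnInterval.fun_add
    hprim).congr fun x hx => (h.2 c hc x (hI hx) i).2.symm

theorem ae_hasDerivAt (h : IsACDeriv I u u') (hI : uIcc c d ⊆ I) (i : Fin 2) :
    ∀ᵐ x, x ∈ Ioo c d → HasDerivAt (fun y => u y i) (u' x i) x := by
  have hc := hI left_mem_uIcc
  filter_upwards [(h.2 c hc d (hI right_mem_uIcc) i).1.ae_hasDerivAt_integral] with x hx hxcd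
  have hnhds : ∀ᶠ y in 𝓝 x, u y i = u c i + ∫ t in c..y, u' t i :=
    mem_of_superset (Icc_mem_nhds hxcd.1 hxcd.2) fun y hy =>
      (h.2 c hc y (hI (Icc_subset_uIcc hy)) i).2
  exact ((hx (Icc_subset_uIcc (Ioo_subset_Icc_self hxcd)) c left_mem_uIcc).const_add
    (u c i)).congr_of_eventuallyEq hnhds

end IsACDeriv

def wronskian (u v : ℝ → Fin 2 → ℝ) (x : ℝ) : ℝ := u x 0 * v x 1 - u x 1 * v x 0

theorem wronskian_deriv_eq_zero_of_dirac {A : Matrix (Fin 2) (Fin 2) ℝ} (hA : A.IsSymm)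
    {p p' q q' : Fin 2 → ℝ} (hp : Jmat.mulVec p' + A.mulVec p = 0)
    (hq : Jmat.mulVec q' + A.mulVec q = 0) :
    p' 0 * q 1 + p 0 * q' 1 - (p' 1 * q 0 + p 1 * q' 0) = 0 := by
  have hp0 := congrFun hp 0
  have hp1 := congrFun hp 1
  have hq0 := congrFun hq 0
  have hq1 := congrFun hq 1
  simp only [Jmat, Matrix.mulVec, dotProduct, Fin.sum_univ_two, Pi.add_apply, Pi.zero_apply,
    Matrix.of_apply, Matrix.cons_val', Matrix.cons_val_zero, Matrix.cons_val_one,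
    Matrix.empty_val', Matrix.cons_val_fin_one] at hp0 hp1 hq0 hq1
  have hA10 : A 1 0 = A 0 1 := hA.apply 0 1
  linear_combination q 1 * hp1 + q 0 * hp0 - p 0 * hq0 - p 1 * hq1 - (p 0 * q 1 - p 1 * q 0) * hA10

theorem IsDiracSolution.wronskian_eq {I : Set ℝ} {φ : ℝ → Matrix (Fin 2) (Fin 2) ℝ}
    {u v : ℝ → Fin 2 → ℝ} (hI : I.OrdConnected) (hs : ∀ x ∈ I, (φ x).IsSymm)
    (hu : IsDiracSolution I φ 0 u) (hv : IsDiracSolution I φ 0 v) {x y : ℝ} (hx : x ∈ I)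
    (hy : y ∈ I) : wronskian u v x = wronskian u v y := by
  wlog hxy : x ≤ y generalizing x y
  · exact (this hy hx (le_of_not_ge hxy)).symm
  obtain ⟨u', hu', hu_eq⟩ := hu
  obtain ⟨v', hv', hv_eq⟩ := hv
  have hsub : uIcc x y ⊆ I := hI.uIcc_subset hx hy
  have hAC : AbsolutelyContinuousOnInterval (wronskian u v) x y :=
    ((hu'.absolutelyContinuousOnInterval hsub 0).fun_mul
      (hv'.absolutelyContinuousOnInterval hsub 1)).fun_sub
      ((hu'.absolutelyContinuousOnInterval hsub 1).fun_mul
      (hv'.absolutelyContinuousOnInterval hsub 0))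
  have hderiv : ∀ᵐ t, t ∈ uIcc x y → HasDerivAt (wronskian u v) 0 t := by
    filter_upwards [hu'.ae_hasDerivAt hsub 0, hu'.ae_hasDerivAt hsub 1,
      hv'.ae_hasDerivAt hsub 0, hv'.ae_hasDerivAt hsub 1, hu_eq, hv_eq,
      (Ioo_ae_eq_Icc (a := x) (b := y)).mem_iff] with t du0 du1 dv0 dv1 eu ev hIoo ht
    rw [uIcc_of_le hxy, ← hIoo] at ht
    have htI : t ∈ I := hsub (Icc_subset_uIcc (Ioo_subset_Icc_self ht))
    exact (((du0 ht).mul (dv1 ht)).sub ((du1 ht).mul (dv0 ht))).congr_deriv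
      (wronskian_deriv_eq_zero_of_dirac (hs t htI) (by simpa using eu htI) (by simpa using ev htI))
  obtain ⟨C, hC⟩ := hAC.const_of_ae_hasDerivAt_zero hderiv
  rw [hC x left_mem_uIcc, hC y right_mem_uIcc]

theorem IsPruefer.wronskian_eq {I : Set ℝ} {u v : ℝ → Fin 2 → ℝ} {θu θv : ℝ → ℝ}
    (hu : IsPruefer I u θu) (hv : IsPruefer I v θv) {x : ℝ} (hx : x ∈ I) :
    ∃ ρ > 0, wronskian u v x = ρ * sin (θu x - θv x) := by
  obtain ⟨ρu, hρu, hu0, hu1⟩ := hu.2 x hx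
  obtain ⟨ρv, hρv, hv0, hv1⟩ := hv.2 x hx
  refine ⟨ρu * ρv, mul_pos hρu hρv, ?_⟩
  rw [wronskian, hu0, hu1, hv0, hv1, sin_sub]
  ring

theorem exists_mem_Icc_sin_eq_zero (m : ℝ) : ∃ t ∈ Icc m (m + π), sin t = 0 := by
  refine ⟨⌈m / π⌉ * π, ⟨?_, ?_⟩, sin_int_mul_pi _⟩
  · exact (div_le_iff₀ pi_pos).1 (Int.le_ceil _)
  · have := mul_le_mul_of_nonneg_right (Int.ceil_lt_add_one (m / π)).le pi_pos.le
    rwa [add_mul, div_mul_cancel₀ _ pi_ne_zero, one_mul] at this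

theorem exists_mem_Icc_sin_ne_zero (m : ℝ) : ∃ t ∈ Icc m (m + π), sin t ≠ 0 := by
  by_cases hm : sin m = 0
  · refine ⟨m + π / 2, ⟨by linarith [pi_pos], by linarith [pi_pos]⟩, ?_⟩
    rw [sin_add_pi_div_two]
    intro hc
    simpa [hm, hc] using sin_sq_add_cos_sq m
  · exact ⟨m, ⟨le_rfl, by linarith [pi_pos]⟩, hm⟩

theorem exists_sin_eq_zero_and_sin_ne_zero_of_pi_le {Δ : ℝ → ℝ} {c d : ℝ}
    (hΔ : ContinuousOn Δ (uIcc c d)) (h : π ≤ |Δ d - Δ c|) :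
    (∃ x ∈ uIcc c d, sin (Δ x) = 0) ∧ ∃ y ∈ uIcc c d, sin (Δ y) ≠ 0 := by
  set m := min (Δ c) (Δ d)
  have hrange : Icc m (m + π) ⊆ Δ '' uIcc c d := by
    refine Subset.trans (Icc_subset_Icc_right ?_) (intermediate_value_uIcc hΔ)
    linarith [max_sub_min_eq_abs (Δ c) (Δ d)]
  obtain ⟨s, hs, hs0⟩ := exists_mem_Icc_sin_eq_zero m
  obtain ⟨t, ht, ht0⟩ := exists_mem_Icc_sin_ne_zero m
  obtain ⟨x, hx, rfl⟩ := hrange hs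
  obtain ⟨y, hy, rfl⟩ := hrange ht
  exact ⟨⟨x, hx, hs0⟩, y, hy, ht0⟩

theorem IsDiracSolution.abs_sub_pruefer_sub_lt_pi {I : Set ℝ} {φ : ℝ → Matrix (Fin 2) (Fin 2) ℝ}
    {u v : ℝ → Fin 2 → ℝ} {θu θv : ℝ → ℝ} (hI : I.OrdConnected) (hs : ∀ x ∈ I, (φ x).IsSymm)
    (hu : IsDiracSolution I φ 0 u) (hv : IsDiracSolution I φ 0 v)
    (hθu : IsPruefer I u θu) (hθv : IsPruefer I v θv) {c d : ℝ} (hc : c ∈ I) (hd : d ∈ I) :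
    |(θu d - θv d) - (θu c - θv c)| < π := by
  have hsub : uIcc c d ⊆ I := hI.uIcc_subset hc hd
  by_contra! h
  obtain ⟨⟨x, hx, hx0⟩, y, hy, hy0⟩ :=
    exists_sin_eq_zero_and_sin_ne_zero_of_pi_le (Δ := fun x => θu x - θv x)
      ((hθu.1.sub hθv.1).mono hsub) h
  obtain ⟨ρx, -, hWx⟩ := hθu.wronskian_eq hθv (hsub hx)
  obtain ⟨ρy, hρy, hWy⟩ := hθu.wronskian_eq hθv (hsub hy)
  have hWy0 : ρy * sin (θu y - θv y) = 0 := by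
    rw [← hWy, hu.wronskian_eq hI hs hv (hsub hy) (hsub hx), hWx, hx0, mul_zero]
  exact hy0 ((mul_eq_zero.1 hWy0).resolve_left hρy.ne')

theorem abs_ceil_sub_floor_sub_lt_four {a b a' b' : ℝ} (h : |(a - b) - (a' - b')| < 2) :
    |(⌈a⌉ - ⌊b⌋) - (⌈a'⌉ - ⌊b'⌋)| < 4 := by
  have hreal : |(((⌈a⌉ - ⌊b⌋) - (⌈a'⌉ - ⌊b'⌋) : ℤ) : ℝ)| < 4 := by
    have := Int.le_ceil a
    have := Int.ceil_lt_add_one a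
    have := Int.le_ceil a'
    have := Int.ceil_lt_add_one a'
    have := Int.floor_le b
    have := Int.sub_one_lt_floor b
    have := Int.floor_le b'
    have := Int.sub_one_lt_floor b'
    rw [abs_lt] at h ⊢
    push_cast
    constructor <;> linarith
  exact_mod_cast hreal

theorem abs_numFlips_sub_lt_four {θu₀ θv₀ θu₁ θv₁ : ℝ → ℝ} {c d : ℝ}
    (h₀ : |(θu₀ d - θv₀ d) - (θu₀ c - θv₀ c)| < π)
    (h₁ : |(θu₁ d - θv₁ d) - (θu₁ c - θv₁ c)| < π) :
    |numFlips θu₀ θu₁ c d - numFlips θv₀ θv₁ c d| < 4 := by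
  rw [numFlips, numFlips, sub_sub_sub_cancel_right]
  refine abs_ceil_sub_floor_sub_lt_four ?_
  rw [← sub_div, ← sub_div, ← sub_div, abs_div, abs_of_pos pi_pos, div_lt_iff₀ pi_pos]
  calc _ = |((θu₁ d - θv₁ d) - (θu₁ c - θv₁ c)) - ((θu₀ d - θv₀ d) - (θu₀ c - θv₀ c))| := by
          ring_nf
    _ ≤ |(θu₁ d - θv₁ d) - (θu₁ c - θv₁ c)| + |(θu₀ d - θv₀ d) - (θu₀ c - θv₀ c)| := abs_sub _ _
    _ < 2 * π := by linarith

theorem numFlips_independence_of_solutions_general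
    (I : Set ℝ) (hIc : I.OrdConnected)
    (φ₀ φ₁ : ℝ → Matrix (Fin 2) (Fin 2) ℝ)
    (hs₀ : ∀ x ∈ I, (φ₀ x).IsSymm) (hs₁ : ∀ x ∈ I, (φ₁ x).IsSymm)
    (u₀ v₀ u₁ v₁ : ℝ → Fin 2 → ℝ)
    (hu₀ : IsDiracSolution I φ₀ 0 u₀) (hv₀ : IsDiracSolution I φ₀ 0 v₀)
    (hu₁ : IsDiracSolution I φ₁ 0 u₁) (hv₁ : IsDiracSolution I φ₁ 0 v₁)
    (θu₀ θv₀ θu₁ θv₁ : ℝ → ℝ)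
    (hθu₀ : IsPruefer I u₀ θu₀) (hθv₀ : IsPruefer I v₀ θv₀)
    (hθu₁ : IsPruefer I u₁ θu₁) (hθv₁ : IsPruefer I v₁ θv₁)
    (c d : ℝ) (hc : c ∈ I) (hd : d ∈ I) :
    |numFlips θu₀ θu₁ c d - numFlips θv₀ θv₁ c d| ≤ 4 :=
  (abs_numFlips_sub_lt_four
    (hu₀.abs_sub_pruefer_sub_lt_pi hIc hs₀ hv₀ hθu₀ hθv₀ hc hd)
    (hu₁.abs_sub_pruefer_sub_lt_pi hIc hs₁ hv₁ hθu₁ hθv₁ hc hd)).le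

theorem numFlips_independence_of_solutions
    (I : Set ℝ) (hIo : IsOpen I) (hIc : I.OrdConnected)
    (φ₀ φ₁ : ℝ → Matrix (Fin 2) (Fin 2) ℝ)
    (hs₀ : ∀ x ∈ I, (φ₀ x).IsSymm) (hs₁ : ∀ x ∈ I, (φ₁ x).IsSymm)
    (hi₀ : ∀ i j : Fin 2, LocallyIntegrableOn (fun x => φ₀ x i j) I volume)
    (hi₁ : ∀ i j : Fin 2, LocallyIntegrableOn (fun x => φ₁ x i j) I volume)
    (u₀ v₀ u₁ v₁ : ℝ → Fin 2 → ℝ)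
    (hu₀ : IsDiracSolution I φ₀ 0 u₀) (hv₀ : IsDiracSolution I φ₀ 0 v₀)
    (hu₁ : IsDiracSolution I φ₁ 0 u₁) (hv₁ : IsDiracSolution I φ₁ 0 v₁)
    (hu₀nt : ∀ x ∈ I, u₀ x ≠ 0) (hv₀nt : ∀ x ∈ I, v₀ x ≠ 0)
    (hu₁nt : ∀ x ∈ I, u₁ x ≠ 0) (hv₁nt : ∀ x ∈ I, v₁ x ≠ 0)
    (θu₀ θv₀ θu₁ θv₁ : ℝ → ℝ)
    (hθu₀ : IsPruefer I u₀ θu₀) (hθv₀ : IsPruefer I v₀ θv₀)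
    (hθu₁ : IsPruefer I u₁ θu₁) (hθv₁ : IsPruefer I v₁ θv₁)
    (c d : ℝ) (hc : c ∈ I) (hd : d ∈ I) (hcd : c < d) :
    |numFlips θu₀ θu₁ c d - numFlips θv₀ θv₁ c d| ≤ 4 :=
  numFlips_independence_of_solutions_general I hIc φ₀ φ₁ hs₀ hs₁ u₀ v₀ u₁ v₁ hu₀ hv₀ hu₁ hv₁ θu₀ θv₀
    θu₁ θv₁ hθu₀ hθv₀ hθu₁ hθv₁ c d hc hd
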